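/- arXiv:2409.00720 — 5 statements merged into one kernel-verified Lean document; each statement's English description precedes it below -/
import Mathlib

section
/- In the instance with n = 2 left agents, m = 1 right agent, examination function v(k) = 1/k, preference probabilities p̂1(1,1) = p̂1(2,1) = 1, p̂2(1,1) = 1, p̂2(1,2) = 1 − ε for a constant 0 < ε < 1, the policy π₁ in which A_1 = A_2 = (1) (the 1×1 matrix) and B_1 is the 2×2 identity matrix (left agent 1 is always ranked first and left agent 2 second in the right agent's list) is socially optimal: SW(π₁) = 1 + (1 − ε)/2 and SW(π) ≤ SW(π₁) for every policy π. -/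
open Finset

/-- A `d × d` doubly stochastic matrix: nonnegative entries, all row sums and
all column sums equal to `1`. -/
def DoublyStochastic {d : ℕ} (S : Fin d → Fin d → ℝ) : Prop :=
  (∀ a b, 0 ≤ S a b) ∧ (∀ a, ∑ b, S a b = 1) ∧ (∀ b, ∑ a, S a b = 1)

/-- Match probability of the pair `(i, j)` under policy `(A, B)`:
`P(i,j) = p_{i,j} · Σ_k Σ_ℓ v(k)·v(ℓ) · A_i(j,k) · B_j(i,ℓ)`
(positions are 1-indexed, so position of index `k : Fin m` is `k+1`). -/
noncomputable def matchProb {n m : ℕ} (p : Fin n → Fin m → ℝ) (v : ℕ → ℝ)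
    (A : Fin n → Fin m → Fin m → ℝ) (B : Fin m → Fin n → Fin n → ℝ)
    (i : Fin n) (j : Fin m) : ℝ :=
  p i j * ∑ k : Fin m, ∑ l : Fin n, (v (k.1 + 1) * v (l.1 + 1)) * (A i j k * B j i l)

/-- Utility of left agent `i`: expected number of matches. -/
noncomputable def Uleft {n m : ℕ} (p : Fin n → Fin m → ℝ) (v : ℕ → ℝ)
    (A : Fin n → Fin m → Fin m → ℝ) (B : Fin m → Fin n → Fin n → ℝ) (i : Fin n) : ℝ :=
  ∑ j : Fin m, matchProb p v A B i j

/-- Utility of right agent `j`: expected number of matches. -/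
noncomputable def Vright {n m : ℕ} (p : Fin n → Fin m → ℝ) (v : ℕ → ℝ)
    (A : Fin n → Fin m → Fin m → ℝ) (B : Fin m → Fin n → Fin n → ℝ) (j : Fin m) : ℝ :=
  ∑ i : Fin n, matchProb p v A B i j

/-- Social welfare: expected total number of matches. -/
noncomputable def SW {n m : ℕ} (p : Fin n → Fin m → ℝ) (v : ℕ → ℝ)
    (A : Fin n → Fin m → Fin m → ℝ) (B : Fin m → Fin n → Fin n → ℝ) : ℝ :=
  ∑ i : Fin n, Uleft p v A B i

/-- `UC p v A B i i'` : the utility left agent `i` receives from the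
opportunity `C_{i'}` of left agent `i'`. -/
noncomputable def UC {n m : ℕ} (p : Fin n → Fin m → ℝ) (v : ℕ → ℝ)
    (A : Fin n → Fin m → Fin m → ℝ) (B : Fin m → Fin n → Fin n → ℝ)
    (i i' : Fin n) : ℝ :=
  ∑ j : Fin m, ∑ k : Fin m, ∑ l : Fin n,
    p i j * (v (k.1 + 1) * v (l.1 + 1)) * (A i j k * B j i' l)

/-- `VD p v A B j j'` : the utility right agent `j` receives from the
opportunity `D_{j'}` of right agent `j'`. -/
noncomputable def VD {n m : ℕ} (p : Fin n → Fin m → ℝ) (v : ℕ → ℝ)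
    (A : Fin n → Fin m → Fin m → ℝ) (B : Fin m → Fin n → Fin n → ℝ)
    (j j' : Fin m) : ℝ :=
  ∑ i : Fin n, ∑ k : Fin m, ∑ l : Fin n,
    p i j * (v (k.1 + 1) * v (l.1 + 1)) * (A i j' k * B j i l)

/-- A policy is double envy-free if no agent envies the opportunity of
another agent on the same side. -/
def DoubleEnvyFree {n m : ℕ} (p : Fin n → Fin m → ℝ) (v : ℕ → ℝ)
    (A : Fin n → Fin m → Fin m → ℝ) (B : Fin m → Fin n → Fin n → ℝ) : Prop :=
  (∀ i i' : Fin n, UC p v A B i i' ≤ UC p v A B i i) ∧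
  (∀ j j' : Fin m, VD p v A B j j' ≤ VD p v A B j j)

/-- Left-side Nash social welfare: product of the left agents' utilities. -/
noncomputable def NSW1 {n m : ℕ} (p : Fin n → Fin m → ℝ) (v : ℕ → ℝ)
    (A : Fin n → Fin m → Fin m → ℝ) (B : Fin m → Fin n → Fin n → ℝ) : ℝ :=
  ∏ i : Fin n, Uleft p v A B i

/-- Right-side Nash social welfare: product of the right agents' utilities. -/
noncomputable def NSW2 {n m : ℕ} (p : Fin n → Fin m → ℝ) (v : ℕ → ℝ)
    (A : Fin n → Fin m → Fin m → ℝ) (B : Fin m → Fin n → Fin n → ℝ) : ℝ :=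
  ∏ j : Fin m, Vright p v A B j

/-- Inverse examination function `v(k) = 1/k`. -/
noncomputable def vInv : ℕ → ℝ := fun k => 1 / (k : ℝ)

/-- Example instance: both left agents fully prefer the single right agent. -/
def p1Ex : Fin 2 → Fin 1 → ℝ := fun _ _ => 1

/-- Example instance: the right agent prefers left agent `1` with probability `1`
and left agent `2` with probability `1 - ε`. -/
noncomputable def p2Ex (ε : ℝ) : Fin 1 → Fin 2 → ℝ :=
  fun _ i => if i = 0 then 1 else 1 - ε

/-- Combined preference probabilities `p_{i,j} = p̂₁(i,j)·p̂₂(j,i)`. -/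
noncomputable def pEx (ε : ℝ) : Fin 2 → Fin 1 → ℝ :=
  fun i j => p1Ex i j * p2Ex ε j i

/-- The (trivial) `1 × 1` recommendation for each left agent. -/
def AEx : Fin 2 → Fin 1 → Fin 1 → ℝ := fun _ _ _ => 1

/-- The right agent's recommendation in policy `π₁` : the identity matrix,
i.e. left agent `1` is always first and left agent `2` always second. -/
def BId : Fin 1 → Fin 2 → Fin 2 → ℝ := fun _ i l => if i = l then 1 else 0

/-- In the instance with `n = 2`, `m = 1`, `v(k) = 1/k`,
`p̂₁ = (1,1)ᵀ` and `p̂₂ = (1, 1-ε)` for `0 < ε < 1`, the policy `π₁ = (AEx, BId)`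
is socially optimal and `SW(π₁) = 1 + (1 - ε)/2`. -/
theorem example_policy_socially_optimal (ε : ℝ) (hε0 : 0 < ε) (hε1 : ε < 1) :
    SW (pEx ε) vInv AEx BId = 1 + (1 - ε) / 2 ∧
    ∀ (A : Fin 2 → Fin 1 → Fin 1 → ℝ) (B : Fin 1 → Fin 2 → Fin 2 → ℝ),
      (∀ i, DoublyStochastic (A i)) → (∀ j, DoublyStochastic (B j)) →
      SW (pEx ε) vInv A B ≤ SW (pEx ε) vInv AEx BId := by
  constructor
  · simp [SW, Uleft, matchProb, pEx, p1Ex, p2Ex, vInv, AEx, BId,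
      Fin.sum_univ_two, Fin.sum_univ_one]
    norm_num
    ring
  · intro A B hA hB
    have hA0 : A 0 0 0 = 1 := by
      have := (hA 0).2.1 0
      simpa [Fin.sum_univ_one] using this
    have hA1 : A 1 0 0 = 1 := by
      have := (hA 1).2.1 0
      simpa [Fin.sum_univ_one] using this
    have hr0 := (hB 0).2.1 0
    have hr1 := (hB 0).2.1 1
    have hc0 := (hB 0).2.2 0
    have hc1 := (hB 0).2.2 1
    have hnn := (hB 0).1
    simp [Fin.sum_univ_two] at hr0 hr1 hc0 hc1
    have h00 := hnn 0 0
    have h01 := hnn 0 1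
    have h10 := hnn 1 0
    have h11 := hnn 1 1
    simp [SW, Uleft, matchProb, pEx, p1Ex, p2Ex, vInv, AEx, BId,
      Fin.sum_univ_two, Fin.sum_univ_one, hA0, hA1]
    nlinarith [mul_nonneg hε0.le h01]
end

section
/- In the instance with n = 2 left agents, m = 1 right agent, examination function v(k) = 1/k, preference probabilities p̂1(1,1) = p̂1(2,1) = 1, p̂2(1,1) = 1, p̂2(1,2) = 1 − ε for a constant 0 < ε < 1, the policy π₁ in which A_1 = A_2 = (1) and B_1 is the 2×2 identity matrix satisfies U_2(C_2) = (1 − ε)/2 < 1 − ε = U_2(C_1); hence left agent 2 envies left agent 1 and π₁ is not double envy-free. -/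
open Finset

/-- In the same instance, under the socially optimal policy
`π₁ = (AEx, BId)` we have `U₂(C₂) = (1-ε)/2 < 1-ε = U₂(C₁)`: left agent `2`
envies left agent `1`, so `π₁` is not double envy-free. -/
theorem example_policy_not_envy_free (ε : ℝ) (hε0 : 0 < ε) (hε1 : ε < 1) :
    UC (pEx ε) vInv AEx BId 1 1 = (1 - ε) / 2 ∧
    UC (pEx ε) vInv AEx BId 1 0 = 1 - ε ∧
    UC (pEx ε) vInv AEx BId 1 1 < UC (pEx ε) vInv AEx BId 1 0 ∧
    ¬ DoubleEnvyFree (pEx ε) vInv AEx BId := by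
  have h1 : UC (pEx ε) vInv AEx BId 1 1 = (1 - ε) / 2 := by
    simp [UC, Fin.sum_univ_succ, pEx, p1Ex, p2Ex, AEx, BId, vInv]
    ring
  have h2 : UC (pEx ε) vInv AEx BId 1 0 = 1 - ε := by
    simp [UC, Fin.sum_univ_succ, pEx, p1Ex, p2Ex, AEx, BId, vInv]
  have h3 : UC (pEx ε) vInv AEx BId 1 1 < UC (pEx ε) vInv AEx BId 1 0 := by
    rw [h1, h2]; linarith
  exact ⟨h1, h2, h3, fun h => absurd (h.1 1 0) (not_le.2 h3)⟩
end

section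
/- In the instance with n = 2 left agents, m = 1 right agent, examination function v(k) = 1/k, preference probabilities p̂1(1,1) = p̂1(2,1) = 1, p̂2(1,1) = 1, p̂2(1,2) = 1 − ε for a constant 0 < ε < 1, the policy π₂ in which A_1 = A_2 = (1) and B_1 = [[1/2, 1/2], [1/2, 1/2]] is double envy-free, but it is not socially optimal: SW(π₂) = 3/4 + 3(1−ε)/4 < 1 + (1−ε)/2 = SW(π₁), where π₁ is the policy with B_1 the 2×2 identity matrix. -/
open Finset

/-- The right agent's recommendation in policy `π₂` : the uniform `2 × 2` matrix. -/
noncomputable def BUnif : Fin 1 → Fin 2 → Fin 2 → ℝ := fun _ _ _ => 1 / 2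

/-- `U_i(C_{i'})` sees `i'` only through the rows `B_j(i', ·)`, and `V_j(D_{j'})` sees `j'` only
through the rows `A_i(j', ·)`. -/
theorem DoubleEnvyFree.of_rankings_agent_independent {n m : ℕ} (p : Fin n → Fin m → ℝ)
    (v : ℕ → ℝ) (A : Fin n → Fin m → Fin m → ℝ) (B : Fin m → Fin n → Fin n → ℝ)
    (hA : ∀ i j j', A i j = A i j') (hB : ∀ j i i', B j i = B j i') :
    DoubleEnvyFree p v A B := by
  refine ⟨fun i i' => le_of_eq ?_, fun j j' => le_of_eq ?_⟩
  · unfold UC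
    simp_rw [fun j => hB j i' i]
  · unfold VD
    simp_rw [fun i => hA i j' j]

theorem SW_of_single_right {n : ℕ} (p : Fin n → Fin 1 → ℝ) (v : ℕ → ℝ)
    (A : Fin n → Fin 1 → Fin 1 → ℝ) (B : Fin 1 → Fin n → Fin n → ℝ) (hA : ∀ i, A i 0 0 = 1) :
    SW p v A B = v 1 * ∑ i, p i 0 * ∑ l : Fin n, v (l.1 + 1) * B 0 i l := by
  simp only [SW, Uleft, matchProb, Fin.sum_univ_one, hA, mul_sum]
  refine sum_congr rfl fun i _ => sum_congr rfl fun l _ => ?_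
  simp only [Fin.coe_ofNat_eq_mod, Nat.zero_mod, zero_add]
  ring

theorem SW_pEx_BUnif (ε : ℝ) : SW (pEx ε) vInv AEx BUnif = 3 / 4 + 3 * (1 - ε) / 4 := by
  rw [SW_of_single_right _ _ _ _ fun _ => rfl]
  simp only [Fin.sum_univ_two, pEx, p1Ex, p2Ex, BUnif, vInv]
  norm_num
  ring

theorem SW_pEx_BId (ε : ℝ) : SW (pEx ε) vInv AEx BId = 1 + (1 - ε) / 2 := by
  rw [SW_of_single_right _ _ _ _ fun _ => rfl]
  simp only [Fin.sum_univ_two, pEx, p1Ex, p2Ex, BId, vInv]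
  norm_num
  ring

theorem example_fair_policy_not_socially_optimal_general
    (ε : ℝ) (hε0 : 0 < ε) :
    DoubleEnvyFree (pEx ε) vInv AEx BUnif ∧
    SW (pEx ε) vInv AEx BUnif = 3 / 4 + 3 * (1 - ε) / 4 ∧
    SW (pEx ε) vInv AEx BId = 1 + (1 - ε) / 2 ∧
    SW (pEx ε) vInv AEx BUnif < SW (pEx ε) vInv AEx BId := by
  refine ⟨DoubleEnvyFree.of_rankings_agent_independent _ _ _ _ (fun _ _ _ => rfl)
    (fun _ _ _ => rfl), SW_pEx_BUnif ε, SW_pEx_BId ε, ?_⟩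
  rw [SW_pEx_BUnif, SW_pEx_BId]
  linarith

/-- In the same instance, the policy `π₂ = (AEx, BUnif)` is double
envy-free, but it is not socially optimal:
`SW(π₂) = 3/4 + 3(1-ε)/4 < 1 + (1-ε)/2 = SW(π₁)`. -/
theorem example_fair_policy_not_socially_optimal
    (ε : ℝ) (hε0 : 0 < ε) (hε1 : ε < 1) :
    DoubleEnvyFree (pEx ε) vInv AEx BUnif ∧
    SW (pEx ε) vInv AEx BUnif = 3 / 4 + 3 * (1 - ε) / 4 ∧
    SW (pEx ε) vInv AEx BId = 1 + (1 - ε) / 2 ∧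
    SW (pEx ε) vInv AEx BUnif < SW (pEx ε) vInv AEx BId :=
  example_fair_policy_not_socially_optimal_general ε hε0
end

section
/- Consider n agents and m divisible goods, where agent i has nonnegative additive valuation u_i ∈ ℝ^m_{≥0}, and suppose every agent values some good positively (for each i there exists j with u_{i,j} > 0). Let X ∈ ℝ^{n×m}_{≥0} be a fractional allocation (Σ_{i=1}^n X_{i,j} = 1 for every good j) that maximizes the Nash social welfare Π_{i=1}^n (Σ_{j=1}^m u_{i,j} X_{i,j}) over all fractional allocations. Then X is envy-free: Σ_{j=1}^m u_{i,j} X_{i,j} ≥ Σ_{j=1}^m u_{i,j} X_{i',j} for all agents i, i'. -/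
open Finset

/-- Any fractional allocation of `m` divisible goods among `n`
agents with nonnegative additive valuations (each agent valuing some good
positively) that maximizes the Nash social welfare is envy-free. -/
theorem max_nash_welfare_allocation_envy_free
    {n m : ℕ}
    (u : Fin n → Fin m → ℝ)
    (hu : ∀ i j, 0 ≤ u i j)
    (hpos : ∀ i : Fin n, ∃ j : Fin m, 0 < u i j)
    (X : Fin n → Fin m → ℝ)
    (hXnn : ∀ i j, 0 ≤ X i j)
    (hXsum : ∀ j : Fin m, ∑ i : Fin n, X i j = 1)
    (hmax : ∀ Y : Fin n → Fin m → ℝ,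
      (∀ i j, 0 ≤ Y i j) → (∀ j : Fin m, ∑ i : Fin n, Y i j = 1) →
      ∏ i : Fin n, (∑ j : Fin m, u i j * Y i j) ≤
        ∏ i : Fin n, (∑ j : Fin m, u i j * X i j)) :
    ∀ i i' : Fin n, ∑ j : Fin m, u i j * X i' j ≤ ∑ j : Fin m, u i j * X i j := by
  intro i i'
  by_contra hcon
  push_neg at hcon
  have hVnn : ∀ k : Fin n, 0 ≤ ∑ j : Fin m, u k j * X k j := fun k =>
    Finset.sum_nonneg fun j _ => mul_nonneg (hu k j) (hXnn k j)
  have hn0 : 0 < n := i.pos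
  have hnR : (0:ℝ) < n := by exact_mod_cast hn0
  -- all utilities at the optimum are positive
  have hprodpos : 0 < ∏ k : Fin n, ∑ j : Fin m, u k j * X k j := by
    have h1 := hmax (fun _ _ => (n:ℝ)⁻¹) (fun _ _ => by positivity) (fun j => by
      rw [Finset.sum_const, card_univ, Fintype.card_fin, nsmul_eq_mul]
      field_simp)
    refine lt_of_lt_of_le ?_ h1
    apply Finset.prod_pos
    intro k _
    obtain ⟨j, hj⟩ := hpos k
    calc (0:ℝ) < u k j * (n:ℝ)⁻¹ := by positivity
      _ ≤ ∑ j' : Fin m, u k j' * (n:ℝ)⁻¹ :=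
        Finset.single_le_sum (f := fun j' => u k j' * (n:ℝ)⁻¹)
          (fun j' _ => by have := hu k j'; positivity) (mem_univ j)
  have hVpos : ∀ k : Fin n, 0 < ∑ j : Fin m, u k j * X k j := by
    intro k
    rcases (hVnn k).lt_or_eq with h | h
    · exact h
    · exact absurd hprodpos (by rw [Finset.prod_eq_zero (mem_univ k) h.symm]; exact lt_irrefl 0)
  set a : ℝ := ∑ j : Fin m, u i j * X i j with ha
  set W : ℝ := ∑ j : Fin m, u i j * X i' j with hW
  clear_value a W
  have hapos : 0 < a := by rw [ha]; exact hVpos i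
  have hWpos : 0 < W := lt_trans hapos hcon
  have hne : i ≠ i' := by rintro rfl; rw [ha, hW] at hcon; exact lt_irrefl _ hcon
  -- choose the transfer fraction ε
  obtain ⟨ε, hε0, hε1, hεkey⟩ :
      ∃ ε : ℝ, 0 < ε ∧ ε < 1 ∧ 0 < ε * W - ε * a - ε * (ε * W) := by
    refine ⟨(W - a) / (2 * W), div_pos (by linarith) (by linarith), ?_, ?_⟩
    · rw [div_lt_one (by linarith)]; linarith
    · have hW0 : W ≠ 0 := ne_of_gt hWpos
      have heq : (W - a) / (2 * W) * W - (W - a) / (2 * W) * a -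
          (W - a) / (2 * W) * ((W - a) / (2 * W) * W) = (W - a) ^ 2 / (4 * W) := by
        field_simp
        ring
      rw [heq]
      exact div_pos (pow_pos (by linarith) 2) (by linarith)
  -- the perturbed allocation
  set Y : Fin n → Fin m → ℝ := fun k j =>
    X k j + (if k = i then ε * X i' j else 0) - (if k = i' then ε * X i' j else 0) with hYdef
  have hYi : ∀ j, Y i j = X i j + ε * X i' j := by intro j; simp [hYdef, hne]
  have hYi' : ∀ j, Y i' j = X i' j - ε * X i' j := by
    intro j; simp [hYdef, Ne.symm hne]
  have hYk : ∀ k, k ≠ i → k ≠ i' → ∀ j, Y k j = X k j := by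
    intro k h1 h2 j; simp [hYdef, h1, h2]
  have hYnn : ∀ k j, 0 ≤ Y k j := by
    intro k j
    by_cases h1 : k = i
    · rw [h1, hYi j]
      have := mul_nonneg hε0.le (hXnn i' j)
      have := hXnn i j
      linarith
    · by_cases h2 : k = i'
      · rw [h2, hYi' j]
        have h3 : (0:ℝ) ≤ 1 - ε := by linarith
        nlinarith [mul_nonneg h3 (hXnn i' j)]
      · rw [hYk k h1 h2 j]; exact hXnn k j
  have hYsum : ∀ j, ∑ k : Fin n, Y k j = 1 := by
    intro j
    simp only [hYdef]
    rw [Finset.sum_sub_distrib, Finset.sum_add_distrib]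
    simp [hXsum j, Finset.sum_ite_eq']
  have hkey := hmax Y hYnn hYsum
  -- compute each agent's utility under Y
  have hgi : (∑ j : Fin m, u i j * Y i j) = a + ε * W := by
    rw [ha, hW, Finset.mul_sum, ← Finset.sum_add_distrib]
    exact Finset.sum_congr rfl fun j _ => by rw [hYi j]; ring
  have hgi' : (∑ j : Fin m, u i' j * Y i' j) =
      (1 - ε) * ∑ j : Fin m, u i' j * X i' j := by
    rw [Finset.mul_sum]
    exact Finset.sum_congr rfl fun j _ => by rw [hYi' j]; ring
  have hgrest : ∀ k, k ≠ i → k ≠ i' →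
      (∑ j : Fin m, u k j * Y k j) = ∑ j : Fin m, u k j * X k j := by
    intro k h1 h2
    exact Finset.sum_congr rfl fun j _ => by rw [hYk k h1 h2 j]
  -- split products
  have hi'mem : i' ∈ univ.erase i := Finset.mem_erase.mpr ⟨Ne.symm hne, mem_univ i'⟩
  have hsplit : ∀ f : Fin n → ℝ,
      ∏ k, f k = f i * (f i' * ∏ k ∈ (univ.erase i).erase i', f k) := by
    intro f
    rw [← Finset.mul_prod_erase univ f (mem_univ i), ← Finset.mul_prod_erase _ f hi'mem]
  rw [hsplit (fun k => ∑ j : Fin m, u k j * Y k j),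
      hsplit (fun k => ∑ j : Fin m, u k j * X k j)] at hkey
  have hrest : ∏ k ∈ (univ.erase i).erase i', (∑ j : Fin m, u k j * Y k j)
      = ∏ k ∈ (univ.erase i).erase i', (∑ j : Fin m, u k j * X k j) := by
    apply Finset.prod_congr rfl
    intro k hk
    simp only [Finset.mem_erase] at hk
    exact hgrest k hk.2.1 hk.1
  rw [hrest, hgi, hgi', ← ha] at hkey
  set b : ℝ := ∑ j : Fin m, u i' j * X i' j with hb
  set P : ℝ := ∏ k ∈ (univ.erase i).erase i', (∑ j : Fin m, u k j * X k j) with hP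
  have hbpos : 0 < b := hVpos i'
  have hPpos : 0 < P := Finset.prod_pos fun k _ => hVpos k
  clear_value b P
  -- hkey : (a + ε*W) * ((1-ε)*b * P) ≤ a * (b * P)
  have hkey' : ((a + ε * W) * (1 - ε)) * (b * P) ≤ a * (b * P) := by
    calc ((a + ε * W) * (1 - ε)) * (b * P)
        = (a + ε * W) * ((1 - ε) * b * P) := by ring
      _ ≤ a * (b * P) := hkey
  have hq := le_of_mul_le_mul_right hkey' (mul_pos hbpos hPpos)
  nlinarith [hq, hεkey]
end

section
/- Suppose the examination function satisfies v(1) = 1 and v(k) = 0 for all k ≥ 2 (the case K = 1), and fix the tuple A of m×m doubly stochastic matrices. Then the tuple B of n×n doubly stochastic matrices yields left-side envy-free opportunities (U_i(C_i) ≥ U_i(C_{i'}) for all i, i' ∈ [n]) if and only if the matrix X ∈ ℝ^{n×m}_{≥0} defined by X_{i,j} = B_j(i,1) is an envy-free fractional allocation of the m right agents (viewed as divisible goods) among the n left agents with additive valuations u_{i,j} = p_{i,j}·A_i(j,1): that is, Σ_{i=1}^n X_{i,j} ≤ 1 holds with the column-sum constraint inherited from double stochasticity, and Σ_{j∈[m]}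 p_{i,j} A_i(j,1) X_{i,j} ≥ Σ_{j∈[m]} p_{i,j} A_i(j,1) X_{i',j} for all i, i' ∈ [n]. -/
open Finset

/-- With `v(1) = 1` and `v(k) = 0` for `k ≥ 2` (`K = 1`), and fixed
doubly stochastic `A` and `B`, the first-position probabilities
`X_{i,j} = B_j(i,1)` form a fractional allocation (columns sum to `1`), and `B`
yields left-side envy-free opportunities iff `X` is an envy-free fractional
allocation of the right agents among the left agents with additive valuations
`u_{i,j} = p_{i,j} · A_i(j,1)`. -/
theorem k1_left_envy_free_iff_allocation_envy_free
    {n m : ℕ} (hn : 0 < n) (hm : 0 < m)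
    (p1 : Fin n → Fin m → ℝ) (p2 : Fin m → Fin n → ℝ)
    (hp1 : ∀ i j, 0 ≤ p1 i j ∧ p1 i j ≤ 1)
    (hp2 : ∀ j i, 0 ≤ p2 j i ∧ p2 j i ≤ 1)
    (v : ℕ → ℝ)
    (hv01 : ∀ k, 0 ≤ v k ∧ v k ≤ 1)
    (hvmono : ∀ k l : ℕ, k ≤ l → v l ≤ v k)
    (hv1 : v 1 = 1) (hvK : ∀ k : ℕ, 2 ≤ k → v k = 0)
    (A : Fin n → Fin m → Fin m → ℝ) (B : Fin m → Fin n → Fin n → ℝ)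
    (hA : ∀ i, DoublyStochastic (A i)) (hB : ∀ j, DoublyStochastic (B j)) :
    (∀ j : Fin m, ∑ i : Fin n, B j i ⟨0, hn⟩ = 1) ∧
    ((∀ i i' : Fin n,
        UC (fun i j => p1 i j * p2 j i) v A B i i' ≤
          UC (fun i j => p1 i j * p2 j i) v A B i i) ↔
      (∀ i i' : Fin n,
        ∑ j : Fin m, (p1 i j * p2 j i * A i j ⟨0, hm⟩) * B j i' ⟨0, hn⟩ ≤
          ∑ j : Fin m, (p1 i j * p2 j i * A i j ⟨0, hm⟩) * B j i ⟨0, hn⟩)) := by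

  constructor
  · intro j
    exact (hB j).2.2 ⟨0, hn⟩
  · have key : ∀ (i i' : Fin n),
        UC (fun i j => p1 i j * p2 j i) v A B i i' =
          ∑ j : Fin m, (p1 i j * p2 j i * A i j ⟨0, hm⟩) * B j i' ⟨0, hn⟩ := by
      intro i i'
      unfold UC
      refine Finset.sum_congr rfl fun j _ => ?_
      rw [Finset.sum_eq_single (⟨0, hm⟩ : Fin m)]
      · rw [Finset.sum_eq_single (⟨0, hn⟩ : Fin n)]
        · simp [hv1]; ring
        · intro l _ hl
          have hl0 : l.1 ≠ 0 := fun h => hl (Fin.ext h)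
          have : 2 ≤ l.1 + 1 := by omega
          rw [hvK _ this]; ring
        · intro h; exact absurd (Finset.mem_univ _) h
      · intro k _ hk
        have hk0 : k.1 ≠ 0 := fun h => hk (Fin.ext h)
        have : 2 ≤ k.1 + 1 := by omega
        rw [hvK _ this]
        simp
      · intro h; exact absurd (Finset.mem_univ _) h
    constructor
    · intro h i i'; rw [← key, ← key]; exact h i i'
    · intro h i i'; rw [key, key]; exact h i i'
end
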